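/- For the block matrix M = [[S, v], [0, 0]] ∈ se(3) with S ∈ so(3) skew-symmetric with θ = √(a²+b²+c²) > 0 and v ∈ ℝ³, the matrix exponential satisfies exp(M) = [[exp(S), A·v], [0, 1]] where A = I + ((1 − cos θ)/θ²)·S + ((θ − sin θ)/θ³)·S². -/

import Mathlib

/-!
Since `S³ = -θ² S`, the series `∑ Sⁿ / (n+1)!` collapses: its odd part is
`(∑ (-θ²)ᵏ / (2k+2)!) S = ((1 - cos θ) / θ²) S` and its even part beyond the constant term is
`(∑ (-θ²)ᵏ / (2k+3)!) S² = ((θ - sin θ) / θ³) S²`, by the Taylor series of `cos` and `sin`.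
On the other hand `[[S, v], [0, 0]]^(n+1) = [[S^(n+1), Sⁿ v], [0, 0]]`, so the exponential series
of the block matrix sums to `[[exp S, (∑ Sⁿ / (n+1)!) v], [0, 1]]`.
-/

open Nat NormedSpace

theorem Real.hasSum_one_sub_cos_div_sq {θ : ℝ} (hθ : θ ≠ 0) :
    HasSum (fun k : ℕ => (-θ ^ 2) ^ k / (2 * k + 2)!) ((1 - Real.cos θ) / θ ^ 2) := by
  refine (hasSum_mul_left_iff (neg_ne_zero.mpr (pow_ne_zero 2 hθ))).mp ?_
  have hcos := (hasSum_nat_add_iff' 1).mpr (Real.hasSum_cos θ)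
  have hterm : ∀ k : ℕ, (-1) ^ (k + 1) * θ ^ (2 * (k + 1)) / (2 * (k + 1))!
      = -θ ^ 2 * ((-θ ^ 2) ^ k / (2 * k + 2)!) := fun k => by
    rw [neg_pow (θ ^ 2), ← pow_mul]; ring_nf
  have hsum : Real.cos θ - ∑ k ∈ Finset.range 1, (-1) ^ k * θ ^ (2 * k) / (2 * k)!
      = -θ ^ 2 * ((1 - Real.cos θ) / θ ^ 2) := by
    simp [field]
  rwa [funext hterm, hsum] at hcos

theorem Real.hasSum_sub_sin_div_cube {θ : ℝ} (hθ : θ ≠ 0) :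
    HasSum (fun k : ℕ => (-θ ^ 2) ^ k / (2 * k + 3)!) ((θ - Real.sin θ) / θ ^ 3) := by
  refine (hasSum_mul_left_iff (neg_ne_zero.mpr (pow_ne_zero 3 hθ))).mp ?_
  have hsin := (hasSum_nat_add_iff' 1).mpr (Real.hasSum_sin θ)
  have hterm : ∀ k : ℕ, (-1) ^ (k + 1) * θ ^ (2 * (k + 1) + 1) / (2 * (k + 1) + 1)!
      = -θ ^ 3 * ((-θ ^ 2) ^ k / (2 * k + 3)!) := fun k => by
    rw [neg_pow (θ ^ 2), ← pow_mul]; ring_nf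
  have hsum : Real.sin θ - ∑ k ∈ Finset.range 1, (-1) ^ k * θ ^ (2 * k + 1) / (2 * k + 1)!
      = -θ ^ 3 * ((θ - Real.sin θ) / θ ^ 3) := by
    simp [field]
  rwa [funext hterm, hsum] at hsin

section PowThree

variable {𝕜 R : Type*} [CommSemiring 𝕜] [Semiring R] [Algebra 𝕜 R] {x : R} {t : 𝕜}

theorem pow_two_mul_add_one_of_pow_three_eq_smul (h : x ^ 3 = t • x) (k : ℕ) :
    x ^ (2 * k + 1) = t ^ k • x := by
  induction k with
  | zero => simp
  | succ k ih =>
    rw [show 2 * (k + 1) + 1 = 2 * k + 1 + 2 by ring, pow_add, ih, smul_mul_assoc,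
      ← pow_succ' x 2, h, smul_smul, pow_succ]

theorem pow_two_mul_add_two_of_pow_three_eq_smul (h : x ^ 3 = t • x) (k : ℕ) :
    x ^ (2 * k + 2) = t ^ k • x ^ 2 := by
  rw [pow_succ, pow_two_mul_add_one_of_pow_three_eq_smul h, smul_mul_assoc, ← sq]

end PowThree

section PowThreeSeries

variable {R : Type*} [Ring R] [Algebra ℝ R] [TopologicalSpace R] [ContinuousAdd R]
  [ContinuousSMul ℝ R]

theorem hasSum_inv_factorial_succ_smul_pow_of_pow_three_eq {x : R} {θ : ℝ} (hθ : θ ≠ 0)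
    (hx : x ^ 3 = (-θ ^ 2) • x) :
    HasSum (fun n : ℕ => ((n + 1)! : ℝ)⁻¹ • x ^ n)
      (1 + ((1 - Real.cos θ) / θ ^ 2) • x + ((θ - Real.sin θ) / θ ^ 3) • x ^ 2) := by
  have hodd : HasSum (fun k : ℕ => ((2 * k + 2)! : ℝ)⁻¹ • x ^ (2 * k + 1))
      (((1 - Real.cos θ) / θ ^ 2) • x) := by
    convert (Real.hasSum_one_sub_cos_div_sq hθ).smul_const x using 2 with k
    rw [pow_two_mul_add_one_of_pow_three_eq_smul hx, smul_smul, div_eq_inv_mul]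
  have heven : HasSum (fun k : ℕ => ((2 * k + 3)! : ℝ)⁻¹ • x ^ (2 * k + 2))
      (((θ - Real.sin θ) / θ ^ 3) • x ^ 2) := by
    convert (Real.hasSum_sub_sin_div_cube hθ).smul_const (x ^ 2) using 2 with k
    rw [pow_two_mul_add_two_of_pow_three_eq_smul hx, smul_smul, div_eq_inv_mul]
  have htail : HasSum (fun n : ℕ => ((n + 2)! : ℝ)⁻¹ • x ^ (n + 1))
      (((1 - Real.cos θ) / θ ^ 2) • x + ((θ - Real.sin θ) / θ ^ 3) • x ^ 2) :=
    hodd.even_add_odd heven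
  have hseries := HasSum.zero_add (f := fun n : ℕ => ((n + 1)! : ℝ)⁻¹ • x ^ n) htail
  rw [add_assoc]
  simpa using hseries

end PowThreeSeries

namespace Matrix

variable {l m n o ι α : Type*}

theorem _root_.HasSum.matrix_fromBlocks [AddCommMonoid α] [TopologicalSpace α]
    {A : ι → Matrix n l α} {B : ι → Matrix n m α} {C : ι → Matrix o l α} {D : ι → Matrix o m α}
    {a : Matrix n l α} {b : Matrix n m α} {c : Matrix o l α} {d : Matrix o m α}
    (hA : HasSum A a) (hB : HasSum B b) (hC : HasSum C c) (hD : HasSum D d) :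
    HasSum (fun i => fromBlocks (A i) (B i) (C i) (D i)) (fromBlocks a b c d) := by
  refine Pi.hasSum.mpr fun i => Pi.hasSum.mpr fun j => ?_
  rcases i with i | i <;> rcases j with j | j
  · exact Pi.hasSum.mp (Pi.hasSum.mp hA i) j
  · exact Pi.hasSum.mp (Pi.hasSum.mp hB i) j
  · exact Pi.hasSum.mp (Pi.hasSum.mp hC i) j
  · exact Pi.hasSum.mp (Pi.hasSum.mp hD i) j

variable [Fintype m] [DecidableEq m] [Fintype n] [DecidableEq n]

theorem fromBlocks_zero_zero_pow_succ [Semiring α] (X : Matrix m m α) (v : Matrix m n α)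
    (k : ℕ) :
    fromBlocks X v (0 : Matrix n m α) (0 : Matrix n n α) ^ (k + 1)
      = fromBlocks (X ^ (k + 1)) (X ^ k * v) 0 0 := by
  induction k with
  | zero => simp
  | succ k ih =>
    rw [pow_succ, ih, fromBlocks_multiply]
    simp [← pow_succ]

variable {𝕂 : Type*} [RCLike 𝕂]

theorem exp_series_hasSum_exp (X : Matrix m m 𝕂) :
    HasSum (fun k : ℕ => (k ! : 𝕂)⁻¹ • X ^ k) (exp X) :=
  open scoped Norms.Operator in exp_series_hasSum_exp' X

theorem exp_fromBlocks_zero_zero (X : Matrix m m 𝕂) (v : Matrix m n 𝕂) {B : Matrix m m 𝕂}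
    (hB : HasSum (fun k : ℕ => ((k + 1)! : 𝕂)⁻¹ • X ^ k) B) :
    exp (fromBlocks X v (0 : Matrix n m 𝕂) (0 : Matrix n n 𝕂))
      = fromBlocks (exp X) (B * v) 0 1 := by
  set N : Matrix (m ⊕ n) (m ⊕ n) 𝕂 := fromBlocks X v 0 0 with hN
  have hX : HasSum (fun k : ℕ => ((k + 1)! : 𝕂)⁻¹ • X ^ (k + 1)) (exp X - 1) := by
    simpa using (hasSum_nat_add_iff' 1).mpr (exp_series_hasSum_exp X)
  have hv : HasSum (fun k : ℕ => ((k + 1)! : 𝕂)⁻¹ • (X ^ k * v)) (B * v) := by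
    simpa [Function.comp_def, smul_mul_assoc] using
      hB.map (AddMonoidHom.mk' (fun Y : Matrix m m 𝕂 => Y * v) fun Y Z => Matrix.add_mul Y Z v)
        (continuous_id.matrix_mul continuous_const)
  have htail : HasSum (fun k : ℕ => ((k + 1)! : 𝕂)⁻¹ • N ^ (k + 1))
      (fromBlocks (exp X - 1) (B * v) 0 0) := by
    convert hX.matrix_fromBlocks hv hasSum_zero hasSum_zero using 2 with k
    rw [hN, fromBlocks_zero_zero_pow_succ, fromBlocks_smul, smul_zero, smul_zero]
  have hsum := HasSum.zero_add (f := fun k : ℕ => (k ! : 𝕂)⁻¹ • N ^ k) htail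
  refine (exp_series_hasSum_exp _).unique ?_
  convert hsum using 1
  rw [factorial_zero, cast_one, inv_one, pow_zero, one_smul, ← fromBlocks_one, fromBlocks_add]
  simp

theorem skew_fin_three_pow_three [CommRing α] (a b c : α) :
    !![0, a, b; -a, 0, c; -b, -c, 0] ^ 3
      = (-(a ^ 2 + b ^ 2 + c ^ 2)) • !![0, a, b; -a, 0, c; -b, -c, 0] := by
  rw [pow_three]
  ext i j
  fin_cases i <;> fin_cases j <;> simp [mul_apply, Fin.sum_univ_succ] <;> ring

end Matrix

open Matrix in
/-- The `SE(3)` exponential: for `M = [[S, v],[0,0]]` with `S ∈ so(3)`, `θ > 0`,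
`exp(M) = [[exp S, A·v],[0,1]]` with `A = I + ((1−cos θ)/θ²)·S + ((θ−sin θ)/θ³)·S²`. -/
theorem se3_exp_formula (a b c : ℝ) (S : Matrix (Fin 3) (Fin 3) ℝ)
    (hS : S = !![0, a, b; -a, 0, c; -b, -c, 0])
    (θ : ℝ) (hθdef : θ = Real.sqrt (a ^ 2 + b ^ 2 + c ^ 2)) (hθ : 0 < θ)
    (v : Matrix (Fin 3) (Fin 1) ℝ)
    (A : Matrix (Fin 3) (Fin 3) ℝ)
    (hA : A = 1 + ((1 - Real.cos θ) / θ ^ 2) • S + ((θ - Real.sin θ) / θ ^ 3) • (S ^ 2)) :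
    NormedSpace.exp
        (Matrix.fromBlocks S v (0 : Matrix (Fin 1) (Fin 3) ℝ) (0 : Matrix (Fin 1) (Fin 1) ℝ)) =
      Matrix.fromBlocks (NormedSpace.exp S) (A * v)
        (0 : Matrix (Fin 1) (Fin 3) ℝ) (1 : Matrix (Fin 1) (Fin 1) ℝ) := by
  have hθsq : θ ^ 2 = a ^ 2 + b ^ 2 + c ^ 2 := by
    rw [hθdef, Real.sq_sqrt (by positivity)]
  have hS3 : S ^ 3 = (-θ ^ 2) • S := by
    rw [hS, hθsq, skew_fin_three_pow_three]
  have hseries := hasSum_inv_factorial_succ_smul_pow_of_pow_three_eq hθ.ne' hS3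
  rw [← hA] at hseries
  exact exp_fromBlocks_zero_zero S v hseries
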